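/- arXiv:1405.5852 — 4 statements merged into one kernel-verified Lean document; each statement's English description precedes it below -/
import Mathlib

section
/- The Mills ratio R(t) is completely monotone on [0, ∞): R is infinitely differentiable there and (-1)^n R^{(n)}(t) ≥ 0 for all integers n ≥ 0 and all t ≥ 0. -/
open MeasureTheory

/-- The standard normal density. -/
noncomputable def gaussPdf (t : ℝ) : ℝ := Real.exp (-t ^ 2 / 2) / Real.sqrt (2 * Real.pi)

/-- The tail of the standard normal distribution. -/
noncomputable def gaussTail (t : ℝ) : ℝ := ∫ s in Set.Ioi t, gaussPdf s

/-- The Mills ratio. -/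
noncomputable def mills (t : ℝ) : ℝ := gaussTail t / gaussPdf t

noncomputable def millsAux (n : ℕ) (t : ℝ) : ℝ :=
  ∫ u in Set.Ioi (0:ℝ), u ^ n * Real.exp (-(t * u) - u ^ 2 / 2)

/-- Complex extension of `millsAux 0`. -/
noncomputable def millsC (z : ℂ) : ℂ :=
  ∫ u in Set.Ioi (0:ℝ), Complex.exp (-(z * u) - (u:ℂ) ^ 2 / 2)

lemma gaussPdf_pos (t : ℝ) : 0 < gaussPdf t := by
  unfold gaussPdf
  positivity

lemma base_integrable (n : ℕ) :
    Integrable (fun u : ℝ => u ^ n * Real.exp (-(1/4 : ℝ) * u ^ 2)) := by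
  have h := integrable_rpow_mul_exp_neg_mul_sq (by norm_num : (0:ℝ) < 1/4)
    (s := (n:ℝ)) (lt_of_lt_of_le neg_one_lt_zero (Nat.cast_nonneg n))
  simpa [Real.rpow_natCast] using h

lemma aux_integrableOn (n : ℕ) (c : ℝ) :
    IntegrableOn (fun u : ℝ => u ^ n * Real.exp (-(c * u) - u ^ 2 / 2)) (Set.Ioi 0) := by
  apply Integrable.mono' (((base_integrable n).const_mul (Real.exp (c ^ 2))).integrableOn)
  · exact Continuous.aestronglyMeasurable (by fun_prop)
  · filter_upwards [ae_restrict_mem measurableSet_Ioi] with u hu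
    have hu0 : (0:ℝ) < u := hu
    have h1 : Real.exp (-(c * u) - u ^ 2 / 2) ≤ Real.exp (c ^ 2) * Real.exp (-(1/4:ℝ) * u ^ 2) := by
      rw [← Real.exp_add]
      apply Real.exp_le_exp.mpr
      nlinarith [sq_nonneg (c + u / 2)]
    have heq : ‖u ^ n * Real.exp (-(c * u) - u ^ 2 / 2)‖
        = u ^ n * Real.exp (-(c * u) - u ^ 2 / 2) := by
      rw [Real.norm_eq_abs, abs_of_nonneg (by positivity)]
    rw [heq]
    calc u ^ n * Real.exp (-(c * u) - u ^ 2 / 2)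
        ≤ u ^ n * (Real.exp (c ^ 2) * Real.exp (-(1/4:ℝ) * u ^ 2)) :=
          mul_le_mul_of_nonneg_left h1 (by positivity)
      _ = Real.exp (c ^ 2) * (u ^ n * Real.exp (-(1/4:ℝ) * u ^ 2)) := by ring

lemma pointwise_hasDerivAt (n : ℕ) (u : ℝ) (x : ℝ) :
    HasDerivAt (fun t => u ^ n * Real.exp (-(t * u) - u ^ 2 / 2))
      (-(u ^ (n+1) * Real.exp (-(x * u) - u ^ 2 / 2))) x := by
  have h1 : HasDerivAt (fun t : ℝ => -(t * u) - u ^ 2 / 2) (-u) x := by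
    simpa using (((hasDerivAt_id x).mul_const u).neg.sub_const (u ^ 2 / 2))
  have h2 := (h1.exp).const_mul (u ^ n)
  exact h2.congr_deriv (by ring)

lemma hasDerivAt_millsAux (n : ℕ) (t : ℝ) :
    HasDerivAt (millsAux n) (-(millsAux (n+1) t)) t := by
  have key := hasDerivAt_integral_of_dominated_loc_of_deriv_le
    (μ := volume.restrict (Set.Ioi (0:ℝ))) (x₀ := t)
    (F := fun x (u : ℝ) => u ^ n * Real.exp (-(x * u) - u ^ 2 / 2))
    (F' := fun x (u : ℝ) => -(u ^ (n+1) * Real.exp (-(x * u) - u ^ 2 / 2)))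
    (bound := fun u => Real.exp ((|t| + 1) ^ 2) * (u ^ (n+1) * Real.exp (-(1/4:ℝ) * u ^ 2)))
    (Metric.ball_mem_nhds t one_pos)
    (Filter.Eventually.of_forall fun x =>
      Continuous.aestronglyMeasurable (by fun_prop))
    (aux_integrableOn n t)
    (Continuous.aestronglyMeasurable (by fun_prop))
    ?_ (((base_integrable (n+1)).const_mul _).integrableOn) ?_
  · have h' : (∫ u in Set.Ioi (0:ℝ), -(u ^ (n+1) * Real.exp (-(t * u) - u ^ 2 / 2)))
        = -(millsAux (n+1) t) := by
      rw [integral_neg]; rfl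
    have := key.2
    rw [h'] at this
    exact this
  · filter_upwards [ae_restrict_mem measurableSet_Ioi] with u hu
    intro x hx
    have hu0 : (0:ℝ) < u := hu
    have hxt : |x| ≤ |t| + 1 := by
      have h1 := (Metric.mem_ball.mp hx).le
      rw [Real.dist_eq] at h1
      have h2 := abs_sub_abs_le_abs_sub x t
      linarith
    have hb : Real.exp (-(x * u) - u ^ 2 / 2)
        ≤ Real.exp ((|t| + 1) ^ 2) * Real.exp (-(1/4:ℝ) * u ^ 2) := by
      rw [← Real.exp_add]
      apply Real.exp_le_exp.mpr
      have h1 : -(x * u) ≤ |x| * u := by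
        have := neg_abs_le (x * u)
        rw [abs_mul, abs_of_pos hu0] at this
        linarith
      have h2 : |x| * u ≤ (|t| + 1) * u := mul_le_mul_of_nonneg_right hxt hu0.le
      nlinarith [sq_nonneg ((|t| + 1) - u / 2)]
    have hnorm : ‖-(u ^ (n+1) * Real.exp (-(x * u) - u ^ 2 / 2))‖
        = u ^ (n+1) * Real.exp (-(x * u) - u ^ 2 / 2) := by
      rw [norm_neg, Real.norm_eq_abs, abs_of_nonneg (by positivity)]
    rw [hnorm]
    calc u ^ (n+1) * Real.exp (-(x * u) - u ^ 2 / 2)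
        ≤ u ^ (n+1) * (Real.exp ((|t| + 1) ^ 2) * Real.exp (-(1/4:ℝ) * u ^ 2)) :=
          mul_le_mul_of_nonneg_left hb (by positivity)
      _ = Real.exp ((|t| + 1) ^ 2) * (u ^ (n+1) * Real.exp (-(1/4:ℝ) * u ^ 2)) := by ring
  · filter_upwards with u
    intro x _
    exact pointwise_hasDerivAt n u x

lemma millsAux_nonneg (n : ℕ) (t : ℝ) : 0 ≤ millsAux n t := by
  apply setIntegral_nonneg measurableSet_Ioi
  intro u hu
  have : (0:ℝ) < u := hu
  positivity

lemma mills_eq (t : ℝ) : mills t = millsAux 0 t := by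
  have htr : (∫ s in Set.Ioi t, gaussPdf s) = ∫ u in Set.Ioi (0:ℝ), gaussPdf (u + t) := by
    have h := (measurePreserving_add_right volume t).setIntegral_preimage_emb
      (measurableEmbedding_addRight t) gaussPdf (Set.Ioi t)
    rw [Set.preimage_add_const_Ioi, sub_self] at h
    exact h.symm
  have hexp : ∀ u : ℝ, gaussPdf (u + t) = gaussPdf t * Real.exp (-(t * u) - u ^ 2 / 2) := by
    intro u
    unfold gaussPdf
    rw [div_mul_eq_mul_div, ← Real.exp_add]
    ring_nf
  have htail : gaussTail t = gaussPdf t * millsAux 0 t := by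
    unfold gaussTail millsAux
    rw [htr]
    simp only [hexp, pow_zero, one_mul]
    rw [integral_const_mul]
  unfold mills
  rw [htail, mul_comm, mul_div_assoc, div_self (gaussPdf_pos t).ne', mul_one]

lemma hasDerivAt_millsC (z : ℂ) :
    DifferentiableAt ℂ millsC z := by
  have key := hasDerivAt_integral_of_dominated_loc_of_deriv_le
    (𝕜 := ℂ) (μ := volume.restrict (Set.Ioi (0:ℝ))) (x₀ := z)
    (F := fun w (u : ℝ) => Complex.exp (-(w * u) - (u:ℂ) ^ 2 / 2))
    (F' := fun w (u : ℝ) => Complex.exp (-(w * u) - (u:ℂ) ^ 2 / 2) * (-(u:ℂ)))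
    (bound := fun u => Real.exp ((‖z‖ + 1) ^ 2) * (u ^ 1 * Real.exp (-(1/4:ℝ) * u ^ 2)))
    (Metric.ball_mem_nhds z one_pos)
    (Filter.Eventually.of_forall fun x =>
      Continuous.aestronglyMeasurable (by fun_prop))
    ?_ (Continuous.aestronglyMeasurable (by fun_prop)) ?_
    (((base_integrable 1).const_mul _).integrableOn) ?_
  · exact key.2.differentiableAt
  · -- integrability of F z
    apply Integrable.mono' ((aux_integrableOn 0 z.re).congr_fun
      (g := fun u => Real.exp (-(z.re * u) - u ^ 2 / 2))
      (fun u _ => by simp only [pow_zero, one_mul]) measurableSet_Ioi)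
    · exact Continuous.aestronglyMeasurable (by fun_prop)
    · filter_upwards [ae_restrict_mem measurableSet_Ioi] with u _
      rw [Complex.norm_exp]
      apply le_of_eq
      congr 1
      have h0 : ((u:ℂ) ^ 2 / 2) = ((u ^ 2 / 2 : ℝ) : ℂ) := by push_cast; ring
      rw [h0]
      simp [Complex.sub_re, Complex.neg_re, Complex.mul_re, ← Complex.ofReal_pow]
  · -- bound
    filter_upwards [ae_restrict_mem measurableSet_Ioi] with u hu
    intro w hw
    have hu0 : (0:ℝ) < u := hu
    have hwz : |w.re| ≤ ‖z‖ + 1 := by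
      have h1 : ‖w - z‖ ≤ 1 := (mem_ball_iff_norm.mp hw).le
      have h2 : |w.re| ≤ ‖w‖ := Complex.abs_re_le_norm w
      have h3 : ‖w‖ ≤ ‖z‖ + ‖w - z‖ := by
        calc ‖w‖ = ‖z + (w - z)‖ := by ring_nf
          _ ≤ ‖z‖ + ‖w - z‖ := norm_add_le _ _
      linarith
    have hre : (-(w * u) - (u:ℂ) ^ 2 / 2).re = -(w.re * u) - u ^ 2 / 2 := by
      have h0 : ((u:ℂ) ^ 2 / 2) = ((u ^ 2 / 2 : ℝ) : ℂ) := by push_cast; ring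
      rw [h0]
      simp [Complex.sub_re, Complex.neg_re, Complex.mul_re, ← Complex.ofReal_pow]
    have hnorm : ‖Complex.exp (-(w * u) - (u:ℂ) ^ 2 / 2) * (-(u:ℂ))‖
        = Real.exp (-(w.re * u) - u ^ 2 / 2) * u := by
      rw [norm_mul, Complex.norm_exp, hre, norm_neg,
        Complex.norm_real, Real.norm_eq_abs, abs_of_pos hu0]
    rw [hnorm]
    have hb : Real.exp (-(w.re * u) - u ^ 2 / 2)
        ≤ Real.exp ((‖z‖ + 1) ^ 2) * Real.exp (-(1/4:ℝ) * u ^ 2) := by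
      rw [← Real.exp_add]
      apply Real.exp_le_exp.mpr
      have h1 : -(w.re * u) ≤ |w.re| * u := by
        have := neg_abs_le (w.re * u)
        rw [abs_mul, abs_of_pos hu0] at this
        linarith
      have h2 : |w.re| * u ≤ (‖z‖ + 1) * u := mul_le_mul_of_nonneg_right hwz hu0.le
      nlinarith [sq_nonneg ((‖z‖ + 1) - u / 2)]
    calc Real.exp (-(w.re * u) - u ^ 2 / 2) * u
        ≤ (Real.exp ((‖z‖ + 1) ^ 2) * Real.exp (-(1/4:ℝ) * u ^ 2)) * u :=
          mul_le_mul_of_nonneg_right hb hu0.le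
      _ = Real.exp ((‖z‖ + 1) ^ 2) * (u ^ 1 * Real.exp (-(1/4:ℝ) * u ^ 2)) := by ring
  · -- pointwise differentiability
    filter_upwards with u
    intro w _
    have h1 : HasDerivAt (fun w : ℂ => -(w * u) - (u:ℂ) ^ 2 / 2) (-(u:ℂ)) w := by
      simpa using (((hasDerivAt_id w).mul_const (u:ℂ)).neg.sub_const ((u:ℂ) ^ 2 / 2))
    exact h1.cexp

lemma millsC_real (t : ℝ) : millsC t = ((millsAux 0 t : ℝ) : ℂ) := by
  unfold millsC millsAux
  have h : Set.EqOn (fun u : ℝ => Complex.exp (-((t:ℂ) * u) - (u:ℂ) ^ 2 / 2))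
      (fun u : ℝ => ((u ^ 0 * Real.exp (-(t * u) - u ^ 2 / 2) : ℝ) : ℂ)) (Set.Ioi 0) := by
    intro u _
    simp only [pow_zero, one_mul]
    rw [Complex.ofReal_exp]
    congr 1
    push_cast
    ring
  rw [setIntegral_congr_fun measurableSet_Ioi h]
  exact integral_ofReal

lemma analyticOnNhd_mills : AnalyticOnNhd ℝ mills Set.univ := by
  have hdiff : DifferentiableOn ℂ millsC Set.univ :=
    fun z _ => (hasDerivAt_millsC z).differentiableWithinAt
  have hC : AnalyticOnNhd ℂ millsC Set.univ := hdiff.analyticOnNhd isOpen_univ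
  have hcomp : mills = Complex.reCLM ∘ millsC ∘ Complex.ofRealCLM := by
    funext t
    simp only [Function.comp_apply, Complex.ofRealCLM_apply, Complex.reCLM_apply]
    rw [millsC_real, Complex.ofReal_re, mills_eq]
  rw [hcomp]
  exact (Complex.reCLM.analyticOnNhd _).comp
    ((hC.restrictScalars).comp (Complex.ofRealCLM.analyticOnNhd _) (Set.mapsTo_univ _ _))
    (Set.mapsTo_univ _ _)

lemma iteratedDerivWithin_mills (n : ℕ) :
    ∀ t ∈ Set.Ici (0:ℝ),
      iteratedDerivWithin n mills (Set.Ici 0) t = (-1:ℝ) ^ n * millsAux n t := by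
  induction n with
  | zero =>
    intro t ht
    simp [iteratedDerivWithin_zero, mills_eq]
  | succ n ih =>
    intro t ht
    rw [iteratedDerivWithin_succ]
    have hcongr : derivWithin (iteratedDerivWithin n mills (Set.Ici 0)) (Set.Ici 0) t
        = derivWithin (fun s => (-1:ℝ) ^ n * millsAux n s) (Set.Ici 0) t :=
      derivWithin_congr ih (ih t ht)
    rw [hcongr]
    have hdw : derivWithin (fun s => (-1:ℝ) ^ n * millsAux n s) (Set.Ici 0) t
        = (-1:ℝ) ^ n * -(millsAux (n+1) t) :=
      (((hasDerivAt_millsAux n t).const_mul ((-1:ℝ) ^ n)).hasDerivWithinAt).derivWithin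
        ((uniqueDiffOn_Ici 0) t ht)
    rw [hdw, pow_succ]
    ring

/-- The Mills ratio is completely monotone on `[0, ∞)`: it is infinitely differentiable
there, and `(-1)^n R^{(n)}(t) ≥ 0` for all `n ≥ 0` and `t ≥ 0`. -/
theorem mills_completelyMonotone :
    ContDiffOn ℝ (⊤ : ℕ∞) mills (Set.Ici 0) ∧
      ∀ (n : ℕ) (t : ℝ), 0 ≤ t →
        0 ≤ (-1 : ℝ) ^ n * iteratedDerivWithin n mills (Set.Ici 0) t := by
  constructor
  · exact (analyticOnNhd_mills.mono (Set.subset_univ _)).contDiffOn (uniqueDiffOn_Ici 0)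
  · intro n t ht
    rw [iteratedDerivWithin_mills n t ht, ← mul_assoc, ← mul_pow]
    simpa using millsAux_nonneg n t
end

section
/- The Laplace polynomials satisfy the three-term recurrences P_{k+1}(t) = t·P_k(t) + k·P_{k−1}(t) and Q_{k+1}(t) = t·Q_k(t) + (k+1)·Q_{k−1}(t) for all integers k ≥ 1. -/
/-! The recurrence for `P` comes from the Appell property `P_{k+1}' = (k+1) P_k`.
For `Q`, differentiating the recurrence at `k` and substituting the defining relation
`Q_{k+1} = P_{k+1} + Q_k'` leaves exactly `(k+1)` times the defining relation
`Q_k = P_k + Q_{k-1}'`, so the recurrence propagates by induction on `k`. -/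

open Polynomial

/-- The Laplace polynomials `P_k`. -/
noncomputable def laplaceP : ℕ → Polynomial ℝ
  | 0 => 1
  | k + 1 => X * laplaceP k + derivative (laplaceP k)

/-- The Laplace polynomials `Q_k`. -/
noncomputable def laplaceQ : ℕ → Polynomial ℝ
  | 0 => 1
  | k + 1 => laplaceP (k + 1) + derivative (laplaceQ k)

theorem laplaceP_succ (k : ℕ) :
    laplaceP (k + 1) = X * laplaceP k + derivative (laplaceP k) := rfl

theorem laplaceQ_succ (k : ℕ) :
    laplaceQ (k + 1) = laplaceP (k + 1) + derivative (laplaceQ k) := rfl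

theorem derivative_laplaceP_succ (k : ℕ) :
    derivative (laplaceP (k + 1)) = ((k + 1 : ℕ) : ℝ[X]) * laplaceP k := by
  induction k with
  | zero => simp [laplaceP]
  | succ k ih =>
    rw [laplaceP_succ (k + 1), derivative_add, derivative_mul, derivative_X, ih,
      derivative_mul, derivative_natCast, laplaceP_succ k]
    push_cast
    ring

theorem laplaceP_three_term (k : ℕ) :
    laplaceP (k + 2) = X * laplaceP (k + 1) + ((k + 1 : ℕ) : ℝ[X]) * laplaceP k := by
  rw [laplaceP_succ (k + 1), derivative_laplaceP_succ]

theorem laplaceQ_three_term (k : ℕ) :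
    laplaceQ (k + 2) = X * laplaceQ (k + 1) + ((k + 2 : ℕ) : ℝ[X]) * laplaceQ k := by
  induction k with
  | zero =>
    simp only [laplaceQ, laplaceP, mul_one, derivative_one, add_zero, derivative_X, zero_add,
      Nat.cast_ofNat]
    ring
  | succ k ih =>
    have hQ' := congrArg derivative ih
    simp only [derivative_add, derivative_mul, derivative_X, derivative_natCast, zero_mul,
      one_mul, zero_add] at hQ'
    rw [laplaceQ_succ (k + 2), laplaceP_three_term, hQ', laplaceQ_succ (k + 1),
      laplaceQ_succ k]
    push_cast
    ring

/-- The Laplace polynomials satisfy the three-term recurrences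
`P_{k+1}(t) = t·P_k(t) + k·P_{k−1}(t)` and `Q_{k+1}(t) = t·Q_k(t) + (k+1)·Q_{k−1}(t)`
for all `k ≥ 1`. -/
theorem laplace_three_term (k : ℕ) (hk : 1 ≤ k) :
    laplaceP (k + 1) = X * laplaceP k + C (k : ℝ) * laplaceP (k - 1) ∧
      laplaceQ (k + 1) = X * laplaceQ k + C ((k : ℝ) + 1) * laplaceQ (k - 1) := by
  obtain ⟨m, rfl⟩ := Nat.exists_eq_add_of_le' hk
  rw [Nat.add_sub_cancel, ← Nat.cast_succ, map_natCast, map_natCast]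
  exact ⟨laplaceP_three_term m, laplaceQ_three_term m⟩
end

section
/- Let q_{k,m} denote the coefficient of t^m in the Laplace polynomial Q_k(t). Then q_{k,m} = 0 whenever m > k or k − m is odd, and if k ≥ m with k − m = 2n even, then q_{k,m} = (((k+m)/2)!/m!) · 2^{−n} · Σ_{j=0}^{n} C(k+1, j), where C(·,·) denotes the binomial coefficient. -/
/-!
Comparing coefficients in `P_{k+1} = t P_k + P_k'` gives `p_{k+1,m+1} = p_{k,m} + (m+2) p_{k,m+2}`,
so `p_{k,m}` vanishes unless `k = m + 2n`, and then `p_{m+2n,m} = (m+2n)! / (m! n! 2^n)`.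
Likewise `q_{k+1,m} = p_{k+1,m} + (m+1) q_{k,m+1}`; the closed form for `q_{m+2n,m}` follows by
induction on `n`, the binomial sums being matched by
`∑_{j ≤ n+1} C(N+1, j) = C(N, n+1) + 2 ∑_{j ≤ n} C(N, j)` and `C(N, n+1) (n+1)! (N-n-1)! = N!`.
-/

open Polynomial

lemma Nat.sum_range_succ_choose_succ (N n : ℕ) :
    ∑ j ∈ Finset.range (n + 1), (N + 1).choose j =
      N.choose n + 2 * ∑ j ∈ Finset.range n, N.choose j := by
  induction n with
  | zero => simp
  | succ n ih =>
    rw [Finset.sum_range_succ, ih, Finset.sum_range_succ, Nat.choose_succ_succ]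
    ring

lemma coeff_laplaceP_succ_zero (k : ℕ) :
    (laplaceP (k + 1)).coeff 0 = (laplaceP k).coeff 1 := by
  simp [laplaceP, coeff_derivative]

lemma coeff_laplaceP_succ_succ (k m : ℕ) :
    (laplaceP (k + 1)).coeff (m + 1) =
      (laplaceP k).coeff m + (m + 2) * (laplaceP k).coeff (m + 2) := by
  rw [laplaceP, coeff_add, coeff_X_mul, coeff_derivative]
  push_cast
  ring

lemma coeff_laplaceQ_succ (k m : ℕ) :
    (laplaceQ (k + 1)).coeff m =
      (laplaceP (k + 1)).coeff m + (m + 1) * (laplaceQ k).coeff (m + 1) := by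
  rw [laplaceQ, coeff_add, coeff_derivative, mul_comm]

lemma coeff_laplaceP_of_ne {k m : ℕ} (h : ∀ n, k ≠ m + 2 * n) : (laplaceP k).coeff m = 0 := by
  induction k generalizing m with
  | zero =>
    simp only [laplaceP, coeff_one, ite_eq_right_iff, one_ne_zero]
    rintro rfl
    exact h 0 rfl
  | succ k ih =>
    cases m with
    | zero => rw [coeff_laplaceP_succ_zero, ih fun n hn => h (n + 1) (by omega)]
    | succ m =>
      rw [coeff_laplaceP_succ_succ, ih fun n hn => h n (by omega),
        ih fun n hn => h (n + 1) (by omega)]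
      ring

lemma coeff_laplaceP_self (m : ℕ) : (laplaceP m).coeff m = 1 := by
  induction m with
  | zero => simp [laplaceP]
  | succ m ih =>
    rw [coeff_laplaceP_succ_succ, ih, coeff_laplaceP_of_ne fun n => by omega]
    ring

lemma coeff_laplaceP_add_two_mul (m n : ℕ) :
    (laplaceP (m + 2 * n)).coeff m =
      ((m + 2 * n).factorial : ℝ) / (m.factorial * n.factorial * 2 ^ n) := by
  induction n generalizing m with
  | zero => simp [coeff_laplaceP_self, Nat.factorial_ne_zero]
  | succ n ihn =>
    induction m with
    | zero =>
      rw [show 0 + 2 * (n + 1) = (1 + 2 * n) + 1 by ring, coeff_laplaceP_succ_zero, ihn]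
      simp only [Nat.factorial_succ, Nat.factorial_zero]
      push_cast
      field_simp
      ring
    | succ m ihm =>
      rw [show m + 1 + 2 * (n + 1) = (m + 2 * (n + 1)) + 1 by ring, coeff_laplaceP_succ_succ, ihm,
        show m + 2 * (n + 1) = (m + 2) + 2 * n by ring, ihn]
      simp only [Nat.factorial_succ]
      push_cast
      field_simp
      ring

lemma coeff_laplaceQ_of_ne {k m : ℕ} (h : ∀ n, k ≠ m + 2 * n) : (laplaceQ k).coeff m = 0 := by
  induction k generalizing m with
  | zero =>
    simp only [laplaceQ, coeff_one, ite_eq_right_iff, one_ne_zero]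
    rintro rfl
    exact h 0 rfl
  | succ k ih =>
    rw [coeff_laplaceQ_succ, coeff_laplaceP_of_ne h, ih fun n hn => h (n + 1) (by omega)]
    ring

lemma coeff_laplaceQ_self (m : ℕ) : (laplaceQ m).coeff m = 1 := by
  cases m with
  | zero => simp [laplaceQ]
  | succ m =>
    rw [coeff_laplaceQ_succ, coeff_laplaceP_self, coeff_laplaceQ_of_ne fun n => by omega]
    ring

lemma coeff_laplaceQ_add_two_mul (m n : ℕ) :
    (laplaceQ (m + 2 * n)).coeff m =
      ((m + n).factorial : ℝ) / m.factorial * ((2 : ℝ) ^ n)⁻¹ *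
        ∑ j ∈ Finset.range (n + 1), ((m + 2 * n + 1).choose j : ℝ) := by
  induction n generalizing m with
  | zero => simp [coeff_laplaceQ_self, Nat.factorial_ne_zero]
  | succ n ih =>
    rw [show m + 2 * (n + 1) = m + 1 + 2 * n + 1 by ring, coeff_laplaceQ_succ, ih,
      show m + 1 + 2 * n + 1 = m + 2 * (n + 1) by ring, coeff_laplaceP_add_two_mul]
    obtain ⟨N, hN⟩ : ∃ N, N = m + 2 * n + 2 := ⟨_, rfl⟩
    rw [show m + 2 * (n + 1) + 1 = N + 1 by omega, show m + 2 * (n + 1) = N by omega,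
      show m + 1 + n = m + n + 1 by ring, show m + (n + 1) = m + n + 1 by ring]
    have hchoose : (N.choose (n + 1) : ℝ) * (n + 1).factorial * (m + n + 1).factorial =
        N.factorial := by
      rw [← Nat.choose_mul_factorial_mul_factorial (show n + 1 ≤ N by omega),
        show N - (n + 1) = m + n + 1 by omega]
      push_cast
      ring
    have hsum : ∑ j ∈ Finset.range (n + 1 + 1), ((N + 1).choose j : ℝ) =
        N.choose (n + 1) + 2 * ∑ j ∈ Finset.range (n + 1), (N.choose j : ℝ) := by
      exact_mod_cast Nat.sum_range_succ_choose_succ N (n + 1)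
    rw [hsum, ← hchoose]
    simp only [Nat.factorial_succ]
    push_cast
    field_simp
    ring

/-- The coefficients `q_{k,m}` of the Laplace polynomials `Q_k`: they vanish when `m > k`
or `k − m` is odd, and when `k − m = 2n ≥ 0` they satisfy
`q_{k,m} = (((k+m)/2)!/m!) · 2^{−n} · Σ_{j=0}^{n} C(k+1, j)`. -/
theorem laplaceQ_coeff (k m : ℕ) :
    ((m > k ∨ Odd ((k : ℤ) - m)) → (laplaceQ k).coeff m = 0) ∧
      (∀ n : ℕ, m ≤ k → k - m = 2 * n →
        (laplaceQ k).coeff m =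
          ((((k + m) / 2).factorial : ℝ) / m.factorial) * ((2 : ℝ) ^ n)⁻¹ *
            ∑ j ∈ Finset.range (n + 1), ((k + 1).choose j : ℝ)) := by
  refine ⟨fun h => coeff_laplaceQ_of_ne fun n hn => ?_, fun n hmk hn => ?_⟩
  · rcases h with h | ⟨t, ht⟩
    · omega
    · rw [hn] at ht
      push_cast at ht
      omega
  · obtain rfl : k = m + 2 * n := by omega
    rw [coeff_laplaceQ_add_two_mul, show (m + 2 * n + m) / 2 = m + n by omega]
end

section
/- For every integer n ≥ 0, Σ_{k=0}^{n} (−1)^k · C(n,k) / (2k+1) = 2^{2n} · (n!)² / (2n+1)!, where C(n,k) denotes the binomial coefficient. -/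
/-!
The sum is the partial fraction expansion of `a ^ n * n ! / ∏_{k ≤ n} (a * k + b)` at `a = 2`,
`b = 1`. That expansion follows by induction on `n`: Pascal's rule writes the sum at `n + 1` as
the difference of the sums at `n` for `b` and for `b + a`. The denominator `∏_{k ≤ n} (2k + 1)`
is the double factorial `(2n + 1)‼ = (2n + 1)! / (2 ^ n * n !)`.
-/

open Finset Nat

theorem sum_range_succ_neg_one_pow_mul_choose_mul {R : Type*} [CommRing R] (g : ℕ → R) (n : ℕ) :
    ∑ k ∈ range (n + 2), (-1 : R) ^ k * (n + 1).choose k * g k =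
      ∑ k ∈ range (n + 1), (-1 : R) ^ k * n.choose k * (g k - g (k + 1)) := by
  calc _ = ∑ k ∈ range (n + 2), ((n + 1).choose k : R) * ((-1) ^ k * g k) :=
        sum_congr rfl fun _ _ ↦ by ring
    _ = ∑ k ∈ range (n + 1), (n.choose k : R) * ((-1) ^ k * g k) +
          ∑ k ∈ range (n + 1), (n.choose k : R) * ((-1) ^ (k + 1) * g (k + 1)) :=
        sum_choose_succ_mul (fun k _ ↦ (-1) ^ k * g k) n
    _ = _ := by rw [← sum_add_distrib]; exact sum_congr rfl fun _ _ ↦ by ring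

theorem sum_range_neg_one_pow_mul_choose_div {K : Type*} [Field K] (a b : K) (n : ℕ)
    (h : ∀ k ≤ n, a * k + b ≠ 0) :
    ∑ k ∈ range (n + 1), (-1 : K) ^ k * n.choose k / (a * k + b) =
      a ^ n * n ! / ∏ k ∈ range (n + 1), (a * k + b) := by
  induction n generalizing b with
  | zero => simp
  | succ n ih =>
    have hb : ∀ k ≤ n, a * k + b ≠ 0 := fun k hk ↦ h k (by omega)
    have hshift (k : ℕ) : a * ((k + 1 : ℕ) : K) + b = a * k + (b + a) := by push_cast; ring
    have hba : ∀ k ≤ n, a * k + (b + a) ≠ 0 := fun k hk ↦ hshift k ▸ h (k + 1) (by omega)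
    have hprod : (∏ k ∈ range (n + 1), (a * k + (b + a))) * b =
        (∏ k ∈ range (n + 1), (a * k + b)) * (a * (n + 1 : ℕ) + b) := by
      rw [← prod_range_succ (fun k : ℕ ↦ a * k + b), prod_range_succ' (fun k : ℕ ↦ a * k + b)]
      simp only [hshift, Nat.cast_zero, mul_zero, zero_add]
    have hP : ∏ k ∈ range (n + 1), (a * k + b) ≠ 0 :=
      prod_ne_zero_iff.2 fun k hk ↦ hb k (Nat.le_of_lt_succ (mem_range.1 hk))
    have hQ : ∏ k ∈ range (n + 1), (a * k + (b + a)) ≠ 0 :=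
      prod_ne_zero_iff.2 fun k hk ↦ hba k (Nat.le_of_lt_succ (mem_range.1 hk))
    have hlast := h (n + 1) le_rfl
    simp only [div_eq_mul_inv, sum_range_succ_neg_one_pow_mul_choose_mul, mul_sub,
      sum_sub_distrib, hshift]
    simp only [← div_eq_mul_inv, ih b hb, ih (b + a) hba, prod_range_succ _ (n + 1),
      factorial_succ]
    push_cast at hlast hprod ⊢
    field_simp
    linear_combination (a ^ n * n !) * hprod

theorem prod_range_succ_two_mul_add_one (n : ℕ) :
    ∏ k ∈ range (n + 1), (2 * k + 1) = (2 * n + 1)‼ := by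
  rw [doubleFactorial_eq_prod_odd, prod_range_succ']
  simp

/-- For every `n ≥ 0`, `Σ_{k=0}^n (−1)^k·C(n,k)/(2k+1) = 2^{2n}·(n!)²/(2n+1)!`. -/
theorem alternating_binomial_sum (n : ℕ) :
    ∑ k ∈ Finset.range (n + 1), (-1 : ℝ) ^ k * (n.choose k : ℝ) / (2 * k + 1) =
      (2 : ℝ) ^ (2 * n) * (n.factorial : ℝ) ^ 2 / ((2 * n + 1).factorial : ℝ) := by
  have hodd : ∏ k ∈ range (n + 1), (2 * (k : ℝ) + 1) = ((2 * n + 1)‼ : ℕ) := by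
    rw [← prod_range_succ_two_mul_add_one]
    push_cast
    rfl
  have hfact : (2 * n + 1)! = (2 * n + 1)‼ * (2 ^ n * n !) := by
    rw [factorial_eq_mul_doubleFactorial, doubleFactorial_two_mul]
  rw [sum_range_neg_one_pow_mul_choose_div 2 1 n fun k _ ↦ by positivity, hodd, hfact]
  push_cast
  field_simp
  ring
end
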